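/- Let X be a Banach space and J_λ : X → X, λ > 0, a family of maps such that each J_λ is a contraction (‖J_λ u − J_λ v‖ ≤ ‖u − v‖) and the resolvent identity J_{λ₂}(f) = J_{λ₁}((λ₁/λ₂) f + (1 − λ₁/λ₂) J_{λ₂}(f)) holds for all λ₁, λ₂ > 0 and f ∈ X. Define A on D(A) := J_1(X) by A(u) := (f − u)/1 for u = J_1(f) (i.e., A u = f − u where J_1 f = u). Then D(A) = J_λ(X) for every λ > 0, and J_λ(f) = (I + λA)^{-1} f for all f ∈ X and λ > 0; in particular A is m-accretive. -/

import Mathlib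

/-!
The resolvent identity with `l₁ = 1` writes `J_l f` as `J₁ g` with
`g = l⁻¹ f + (1 - l⁻¹) J_l f`, and `A (J₁ g) = g - J₁ g` unwinds to `J_l f + l A (J_l f) = f`.
So `J_l` is a right inverse of `I + l A`; combined with `D(A) = J_l(X)` it is the inverse, and
the contractivity of `J_l` becomes the expansivity of `I + l A` on `D(A)`.
-/

section ResolventIdentity

variable {X : Type*} [AddCommGroup X] [Module ℝ X]

def SatisfiesResolventIdentity (J : ℝ → X → X) : Prop :=
  ∀ l₁ l₂ : ℝ, 0 < l₁ → 0 < l₂ → ∀ f : X,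
    J l₂ f = J l₁ ((l₁ / l₂) • f + (1 - l₁ / l₂) • J l₂ f)

variable {J : ℝ → X → X}

theorem SatisfiesResolventIdentity.range_subset {l₁ l₂ : ℝ} (hres : SatisfiesResolventIdentity J)
    (hl₁ : 0 < l₁) (hl₂ : 0 < l₂) : Set.range (J l₂) ⊆ Set.range (J l₁) := by
  rintro _ ⟨f, rfl⟩
  exact ⟨_, (hres l₁ l₂ hl₁ hl₂ f).symm⟩

theorem SatisfiesResolventIdentity.range_eq {l₁ l₂ : ℝ} (hres : SatisfiesResolventIdentity J)
    (hl₁ : 0 < l₁) (hl₂ : 0 < l₂) : Set.range (J l₂) = Set.range (J l₁) :=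
  (hres.range_subset hl₁ hl₂).antisymm (hres.range_subset hl₂ hl₁)

theorem SatisfiesResolventIdentity.add_smul_apply_eq {A : X → X}
    (hres : SatisfiesResolventIdentity J) (hA : ∀ f : X, A (J 1 f) = f - J 1 f)
    {l : ℝ} (hl : 0 < l) (f : X) : J l f + l • A (J l f) = f := by
  have hJ := hres 1 l one_pos hl f
  rw [hJ, hA, ← hJ]
  match_scalars <;> field_simp; ring

end ResolventIdentity

theorem norm_sub_le_of_right_inverse_of_contraction {X : Type*} [SeminormedAddCommGroup X]
    {B R : X → X} (hR : ∀ f, B (R f) = f) (hcontract : ∀ u v, ‖R u - R v‖ ≤ ‖u - v‖)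
    {u v : X} (hu : u ∈ Set.range R) (hv : v ∈ Set.range R) : ‖u - v‖ ≤ ‖B u - B v‖ := by
  obtain ⟨f, rfl⟩ := hu
  obtain ⟨g, rfl⟩ := hv
  simpa only [hR] using hcontract f g

theorem resolvent_family_generates_m_accretive_general {X : Type*} [NormedAddCommGroup X]
    [NormedSpace ℝ X] (J : ℝ → X → X) (A : X → X)
    (hcontract : ∀ l : ℝ, 0 < l → ∀ u v : X, ‖J l u - J l v‖ ≤ ‖u - v‖)
    (hres : ∀ l₁ l₂ : ℝ, 0 < l₁ → 0 < l₂ → ∀ f : X,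
      J l₂ f = J l₁ ((l₁ / l₂) • f + (1 - l₁ / l₂) • J l₂ f))
    (hA : ∀ f : X, A (J 1 f) = f - J 1 f) :
    (∀ l : ℝ, 0 < l → Set.range (J l) = Set.range (J 1)) ∧
    (∀ l : ℝ, 0 < l → ∀ f : X, J l f + l • A (J l f) = f) ∧
    (∀ l : ℝ, 0 < l → ∀ u ∈ Set.range (J 1), ∀ v ∈ Set.range (J 1),
      ‖u - v‖ ≤ ‖(u + l • A u) - (v + l • A v)‖) := by
  have hres : SatisfiesResolventIdentity J := hres
  refine ⟨fun l hl => hres.range_eq one_pos hl, fun l hl => hres.add_smul_apply_eq hA hl, ?_⟩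
  intro l hl u hu v hv
  rw [← hres.range_eq one_pos hl] at hu hv
  exact norm_sub_le_of_right_inverse_of_contraction (B := fun u => u + l • A u)
    (hres.add_smul_apply_eq hA hl) (hcontract l hl) hu hv

/-- A family `{J_λ}` of contractions on a Banach space satisfying the resolvent
identity is the resolvent family of a single m-accretive operator `A` defined by
`A(J₁ f) = f − J₁ f`: the ranges `J_λ(X)` coincide for all `λ > 0`,
`J_λ f + λ A(J_λ f) = f` (i.e. `J_λ = (I + λA)⁻¹`), and `A` is accretive in the
sense that `I + λA` is expansive on `D(A) = J₁(X)`. -/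
theorem resolvent_family_generates_m_accretive {X : Type*} [NormedAddCommGroup X]
    [NormedSpace ℝ X] [CompleteSpace X] (J : ℝ → X → X) (A : X → X)
    (hcontract : ∀ l : ℝ, 0 < l → ∀ u v : X, ‖J l u - J l v‖ ≤ ‖u - v‖)
    (hres : ∀ l₁ l₂ : ℝ, 0 < l₁ → 0 < l₂ → ∀ f : X,
      J l₂ f = J l₁ ((l₁ / l₂) • f + (1 - l₁ / l₂) • J l₂ f))
    (hA : ∀ f : X, A (J 1 f) = f - J 1 f) :
    (∀ l : ℝ, 0 < l → Set.range (J l) = Set.range (J 1)) ∧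
    (∀ l : ℝ, 0 < l → ∀ f : X, J l f + l • A (J l f) = f) ∧
    (∀ l : ℝ, 0 < l → ∀ u ∈ Set.range (J 1), ∀ v ∈ Set.range (J 1),
      ‖u - v‖ ≤ ‖(u + l • A u) - (v + l • A v)‖) :=
  resolvent_family_generates_m_accretive_general J A hcontract hres hA
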